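/- The words ABCACBAB and ABCACBAC each occur as a factor of some P^n(A), and each occurs in exactly one position within exactly one product of two blocks from {P(A), P(B), P(C)}. -/

import Mathlib

inductive T where
  | A | B | C
deriving DecidableEq, Repr

open T

def P : T → List T
  | A => [A,B,C,B,A,C,B,C,A,B,C,B,A]
  | B => [B,C,A,C,B,A,C,A,B,C,A,C,B]
  | C => [C,A,B,A,C,B,A,B,C,A,B,A,C]

def Pw (w : List T) : List T := w.flatMap P

def SqFree (w : List T) : Prop := ∀ x : List T, x ≠ [] → ¬ (x ++ x) <:+: w

def rot : T → T
  | A => B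
  | B => C
  | C => A

def rotw (w : List T) : List T := w.map rot

def refT : T → T
  | A => A
  | B => C
  | C => B

def reflw (w : List T) : List T := w.map refT

def OccursAt (w v : List T) (i : ℕ) : Prop := (v.drop i).take w.length = w

/-! Both words occur inside a two-block product P(x)P(y) whose pair xy is itself a factor of P(A)
(BA for the first word, AB for the second), so applying P once more puts them in P²(A).
Any occurrence in a 26-letter product P(x)P(y) starts before position 26, so the occurrences
form a finite set that is computed by evaluation. -/

instance : Fintype T := ⟨{A, B, C}, fun x => by cases x <;> simp⟩

instance (w v : List T) (i : ℕ) : Decidable (OccursAt w v i) := decEq _ _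

lemma OccursAt.isInfix {w v : List T} {i : ℕ} (h : OccursAt w v i) : w <:+: v :=
  h ▸ (List.take_prefix _ _).isInfix.trans (List.drop_suffix _ _).isInfix

lemma OccursAt.add_length_le {w v : List T} {i : ℕ} (hw : w ≠ []) (h : OccursAt w v i) :
    i + w.length ≤ v.length := by
  have hlen := congrArg List.length h
  rw [List.length_take, List.length_drop] at hlen
  have : w.length ≠ 0 := by simpa using hw
  omega

lemma length_P (x : T) : (P x).length = 13 := by
  cases x <;> rfl

def blockOccurrences (w : List T) : Finset ((T × T) × ℕ) :=
  (Finset.univ ×ˢ Finset.range 26).filter fun q => OccursAt w (P q.1.1 ++ P q.1.2) q.2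

lemma mem_blockOccurrences {w : List T} (hw : w ≠ []) {q : (T × T) × ℕ} :
    q ∈ blockOccurrences w ↔ OccursAt w (P q.1.1 ++ P q.1.2) q.2 := by
  refine ⟨fun h => (Finset.mem_filter.1 h).2, fun h => Finset.mem_filter.2 ⟨?_, h⟩⟩
  have hle := h.add_length_le hw
  simp only [List.length_append, length_P] at hle
  simp only [Finset.mem_product, Finset.mem_univ, Finset.mem_range, true_and]
  have : w.length ≠ 0 := by simpa using hw
  omega

lemma existsUnique_occursAt_blocks {w : List T} (hw : w ≠ []) {q₀ : (T × T) × ℕ}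
    (h : blockOccurrences w = {q₀}) :
    ∃! q : (T × T) × ℕ, OccursAt w (P q.1.1 ++ P q.1.2) q.2 := by
  simpa only [← mem_blockOccurrences hw, h, Finset.mem_singleton] using existsUnique_eq

lemma isInfix_iterate_Pw_of_occursAt_blocks {w : List T} {x y : T} {i n : ℕ}
    (hocc : OccursAt w (P x ++ P y) i) (hxy : [x, y] <:+: Pw^[n] [A]) :
    w <:+: Pw^[n + 1] [A] := by
  rw [Function.iterate_succ_apply']
  have hPw : Pw [x, y] = P x ++ P y := by simp [Pw]
  exact hocc.isInfix.trans (hPw ▸ hxy.flatMap P)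

theorem stmt14 :
    ((∃ n : ℕ, [A,B,C,A,C,B,A,B] <:+: Pw^[n] [A]) ∧
      (∃! q : (T × T) × ℕ, OccursAt [A,B,C,A,C,B,A,B] (P q.1.1 ++ P q.1.2) q.2)) ∧
    ((∃ n : ℕ, [A,B,C,A,C,B,A,C] <:+: Pw^[n] [A]) ∧
      (∃! q : (T × T) × ℕ, OccursAt [A,B,C,A,C,B,A,C] (P q.1.1 ++ P q.1.2) q.2)) := by
  have hocc₁ : blockOccurrences [A,B,C,A,C,B,A,B] = {((B, A), 7)} := by decide
  have hocc₂ : blockOccurrences [A,B,C,A,C,B,A,C] = {((A, B), 12)} := by decide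
  have hBA : [B, A] <:+: Pw^[1] [A] := by decide
  have hAB : [A, B] <:+: Pw^[1] [A] := by decide
  refine ⟨⟨⟨2, ?_⟩, existsUnique_occursAt_blocks (by simp) hocc₁⟩,
    ⟨⟨2, ?_⟩, existsUnique_occursAt_blocks (by simp) hocc₂⟩⟩
  · exact isInfix_iterate_Pw_of_occursAt_blocks (i := 7) (by decide) hBA
  · exact isInfix_iterate_Pw_of_occursAt_blocks (i := 12) (by decide) hAB
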